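/- arXiv:2203.12275 — 15 statements merged into one kernel-verified Lean document; each statement's English description precedes it below -/
import Mathlib

section
/- Let (C, D, ⪯, v*) be a weakly safe configuration for the input formula F and objective f such that the set C ∪ D of PB constraints is unsatisfiable. Then every assignment α satisfying F has (f α : WithTop ℤ) ≥ v*; in particular, if v* = ⊤ then F is unsatisfiable. -/
structure PBConstraint (V : Type) where
  coeff : V → ℤ
  pol : V → Bool
  degree : ℤ

def PBSat {V : Type} [Fintype V] (ρ : V → Bool) (c : PBConstraint V) : Prop :=
  c.degree ≤ ∑ x : V, c.coeff x * (if ρ x = c.pol x then 1 else 0)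

def SatSet {V : Type} [Fintype V] (ρ : V → Bool) (S : Set (PBConstraint V)) : Prop :=
  ∀ c ∈ S, PBSat ρ c

def PBSatisfiable {V : Type} [Fintype V] (S : Set (PBConstraint V)) : Prop :=
  ∃ ρ : V → Bool, SatSet ρ S

def WeaklySafe {V : Type} [Fintype V] (F : Set (PBConstraint V))
    (f : (V → Bool) → ℤ) (C D : Set (PBConstraint V))
    (pre : (V → Bool) → (V → Bool) → Prop) (v : WithTop ℤ) : Prop :=
  (∀ v' : ℤ, (v' : WithTop ℤ) < v →
      (∃ ρ, SatSet ρ F ∧ f ρ ≤ v') → ∃ ρ, SatSet ρ C ∧ f ρ ≤ v') ∧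
  (∀ ρ, SatSet ρ C → (f ρ : WithTop ℤ) < v →
      ∃ ρ', pre ρ' ρ ∧ f ρ' ≤ f ρ ∧ SatSet ρ' (C ∪ D))

def Safe {V : Type} [Fintype V] (F : Set (PBConstraint V))
    (f : (V → Bool) → ℤ) (C D : Set (PBConstraint V))
    (pre : (V → Bool) → (V → Bool) → Prop) (v : WithTop ℤ) : Prop :=
  WeaklySafe F f C D pre v ∧
  (v < ⊤ → ∃ ρ, SatSet ρ F ∧ (f ρ : WithTop ℤ) ≤ v) ∧
  (∀ v' : ℤ, (v' : WithTop ℤ) < v →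
      (∃ ρ, SatSet ρ C ∧ f ρ ≤ v') → ∃ ρ, SatSet ρ F ∧ f ρ ≤ v')

theorem weakly_safe_final_config_sound {V : Type} [Fintype V]
    (F : Set (PBConstraint V)) (f : (V → Bool) → ℤ)
    (C D : Set (PBConstraint V))
    (pre : (V → Bool) → (V → Bool) → Prop)
    (hrefl : ∀ ρ, pre ρ ρ)
    (htrans : ∀ a b c, pre a b → pre b c → pre a c)
    (vstar : WithTop ℤ)
    (hws : WeaklySafe F f C D pre vstar)
    (hunsat : ¬ PBSatisfiable (C ∪ D)) :
    (∀ α : V → Bool, SatSet α F → vstar ≤ (f α : WithTop ℤ)) ∧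
      (vstar = ⊤ → ¬ PBSatisfiable F) := by
  have main : ∀ α : V → Bool, SatSet α F → vstar ≤ (f α : WithTop ℤ) := by
    intro α hα
    by_contra hlt
    push_neg at hlt
    obtain ⟨h1, h2⟩ := hws
    obtain ⟨ρ, hρC, hρf⟩ := h1 (f α) hlt ⟨α, hα, le_refl _⟩
    have hρlt : (f ρ : WithTop ℤ) < vstar :=
      lt_of_le_of_lt (by exact_mod_cast hρf) hlt
    obtain ⟨ρ', _, _, hsat⟩ := h2 ρ hρC hρlt
    exact hunsat ⟨ρ', hsat⟩
  refine ⟨main, ?_⟩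
  rintro rfl ⟨α, hα⟩
  exact absurd (main α hα) (by simp)
end

section
/- Let (C, D, ⪯, v*) be a safe configuration for the input formula F and objective f such that the set C ∪ D of PB constraints is unsatisfiable. Then F is unsatisfiable if and only if v* = ⊤; moreover, if F is satisfiable, then there exists an assignment α satisfying F with (f α : WithTop ℤ) = v* and such that every assignment β satisfying F has f β ≥ f α (i.e., α is an f-minimal solution for F with objective value v*). -/
theorem safe_final_config_sound {V : Type} [Fintype V]
    (F : Set (PBConstraint V)) (f : (V → Bool) → ℤ)
    (C D : Set (PBConstraint V))
    (pre : (V → Bool) → (V → Bool) → Prop)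
    (hrefl : ∀ ρ, pre ρ ρ)
    (htrans : ∀ a b c, pre a b → pre b c → pre a c)
    (vstar : WithTop ℤ)
    (hs : Safe F f C D pre vstar)
    (hunsat : ¬ PBSatisfiable (C ∪ D)) :
    (¬ PBSatisfiable F ↔ vstar = ⊤) ∧
      (PBSatisfiable F →
        ∃ α : V → Bool, SatSet α F ∧ (f α : WithTop ℤ) = vstar ∧
          ∀ β : V → Bool, SatSet β F → f α ≤ f β) := by
  obtain ⟨⟨h1, h2⟩, h3, h4⟩ := hs
  -- No assignment satisfying C has f-value < vstar
  have hC : ∀ ρ, SatSet ρ C → ¬ ((f ρ : WithTop ℤ) < vstar) := by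
    intro ρ hρ hlt
    obtain ⟨ρ', _, _, hsat⟩ := h2 ρ hρ hlt
    exact hunsat ⟨ρ', hsat⟩
  -- No assignment satisfying F has f-value < vstar
  have hF : ∀ ρ, SatSet ρ F → ¬ ((f ρ : WithTop ℤ) < vstar) := by
    intro ρ hρ hlt
    obtain ⟨ρ', hρ'C, hle⟩ := h1 (f ρ) hlt ⟨ρ, hρ, le_rfl⟩
    exact hC ρ' hρ'C (lt_of_le_of_lt (by exact_mod_cast hle) hlt)
  have hiff : ¬ PBSatisfiable F ↔ vstar = ⊤ := by
    constructor
    · intro hns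
      by_contra htop
      obtain ⟨ρ, hρ, _⟩ := h3 (lt_top_iff_ne_top.mpr htop)
      exact hns ⟨ρ, hρ⟩
    · rintro rfl ⟨ρ, hρ⟩
      exact hF ρ hρ (WithTop.coe_lt_top _)
  refine ⟨hiff, ?_⟩
  intro hFsat
  have htop : vstar ≠ ⊤ := fun h => (hiff.mpr h) hFsat
  obtain ⟨α, hαF, hαle⟩ := h3 (lt_top_iff_ne_top.mpr htop)
  have heq : (f α : WithTop ℤ) = vstar := le_antisymm hαle (not_lt.mp (hF α hαF))
  refine ⟨α, hαF, heq, ?_⟩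
  intro β hβF
  by_contra hlt
  push_neg at hlt
  exact hF β hβF (heq ▸ (by exact_mod_cast hlt))
end

section
/- (Soundness of the implicational derivation rule.) Suppose the configuration (C, D, ⪯, v) is safe (respectively, weakly safe), and E is a PB constraint such that every assignment ρ satisfying C ∪ D with (f ρ : WithTop ℤ) < v also satisfies E. Then the configuration (C, D ∪ {E}, ⪯, v) is safe (respectively, weakly safe). -/
theorem implicational_derivation_sound {V : Type} [Fintype V]
    (F : Set (PBConstraint V)) (f : (V → Bool) → ℤ)
    (C D : Set (PBConstraint V))
    (pre : (V → Bool) → (V → Bool) → Prop)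
    (hrefl : ∀ ρ, pre ρ ρ)
    (htrans : ∀ a b c, pre a b → pre b c → pre a c)
    (v : WithTop ℤ) (E : PBConstraint V)
    (hrule : ∀ ρ : V → Bool, SatSet ρ (C ∪ D) → (f ρ : WithTop ℤ) < v → PBSat ρ E) :
    (Safe F f C D pre v → Safe F f C (D ∪ {E}) pre v) ∧
      (WeaklySafe F f C D pre v → WeaklySafe F f C (D ∪ {E}) pre v) := by
  have key : WeaklySafe F f C D pre v → WeaklySafe F f C (D ∪ {E}) pre v := by
    rintro ⟨h1, h2⟩
    refine ⟨h1, fun ρ hC hv => ?_⟩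
    obtain ⟨ρ', hpre, hle, hsat⟩ := h2 ρ hC hv
    have hv' : (f ρ' : WithTop ℤ) < v :=
      lt_of_le_of_lt (by exact_mod_cast hle) hv
    have hE := hrule ρ' hsat hv'
    refine ⟨ρ', hpre, hle, fun c hc => ?_⟩
    rcases hc with hc | hc | hc
    · exact hsat c (Or.inl hc)
    · exact hsat c (Or.inr hc)
    · cases hc; exact hE
  exact ⟨fun ⟨hw, h3, h4⟩ => ⟨key hw, h3, h4⟩, key⟩
end

section
/- (Soundness of the objective bound update rule.) Suppose the configuration (C, D, ⪯, v) is safe (respectively, weakly safe) and there exists an assignment α satisfying C with f α = v' and (v' : WithTop ℤ) < v. Then the configuration (C, D, ⪯, v') is safe (respectively, weakly safe). -/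
theorem objective_bound_update_sound {V : Type} [Fintype V]
    (F : Set (PBConstraint V)) (f : (V → Bool) → ℤ)
    (C D : Set (PBConstraint V))
    (pre : (V → Bool) → (V → Bool) → Prop)
    (hrefl : ∀ ρ, pre ρ ρ)
    (htrans : ∀ a b c, pre a b → pre b c → pre a c)
    (v : WithTop ℤ) (v' : ℤ) (hv' : (v' : WithTop ℤ) < v)
    (hα : ∃ α : V → Bool, SatSet α C ∧ f α = v') :
    (Safe F f C D pre v → Safe F f C D pre (v' : WithTop ℤ)) ∧
      (WeaklySafe F f C D pre v → WeaklySafe F f C D pre (v' : WithTop ℤ)) := by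
  have hws : WeaklySafe F f C D pre v → WeaklySafe F f C D pre (v' : WithTop ℤ) := by
    rintro ⟨h1, h2⟩
    exact ⟨fun w hw => h1 w (hw.trans hv'),
      fun ρ hρ hf => h2 ρ hρ (hf.trans hv')⟩
  refine ⟨?_, hws⟩
  rintro ⟨hw, _, h4⟩
  obtain ⟨α, hαC, hαf⟩ := hα
  refine ⟨hws hw, ?_, fun w hw' => h4 w (hw'.trans hv')⟩
  intro _
  obtain ⟨ρ, hρF, hρf⟩ := h4 v' hv' ⟨α, hαC, le_of_eq hαf⟩
  exact ⟨ρ, hρF, by exact_mod_cast hρf⟩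
end

section
/- (Soundness of the redundance-based strengthening rule.) Suppose the configuration (C, D, ⪯, v) is safe (respectively, weakly safe), E is a PB constraint, and ω is a substitution such that for every assignment ρ that satisfies C ∪ D, has (f ρ : WithTop ℤ) < v, and does not satisfy E, the composed assignment ρ∘ω satisfies C ∪ D ∪ {E}, f (ρ∘ω) ≤ f ρ, and ρ∘ω ⪯ ρ. Then the configuration (C, D ∪ {E}, ⪯, v) is safe (respectively, weakly safe). -/
def Subst (V : Type) : Type := V → Bool ⊕ (V × Bool)

/-- The composed assignment `ρ∘ω`: the value of `ω x` under `ρ`,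
where a literal `(y, s)` has value `ρ y` if `s = true` and `!(ρ y)` otherwise,
and constants evaluate to themselves. -/
def applySubst {V : Type} (ω : Subst V) (ρ : V → Bool) : V → Bool :=
  fun x =>
    match ω x with
    | Sum.inl b => b
    | Sum.inr (y, s) => if s then ρ y else !(ρ y)

theorem redundance_based_strengthening_sound {V : Type} [Fintype V]
    (F : Set (PBConstraint V)) (f : (V → Bool) → ℤ)
    (C D : Set (PBConstraint V))
    (pre : (V → Bool) → (V → Bool) → Prop)
    (hrefl : ∀ ρ, pre ρ ρ)
    (htrans : ∀ a b c, pre a b → pre b c → pre a c)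
    (v : WithTop ℤ) (E : PBConstraint V) (ω : Subst V)
    (hrule : ∀ ρ : V → Bool, SatSet ρ (C ∪ D) → (f ρ : WithTop ℤ) < v →
      ¬ PBSat ρ E →
        SatSet (applySubst ω ρ) (C ∪ D ∪ {E}) ∧
        f (applySubst ω ρ) ≤ f ρ ∧
        pre (applySubst ω ρ) ρ) :
    (Safe F f C D pre v → Safe F f C (D ∪ {E}) pre v) ∧
      (WeaklySafe F f C D pre v → WeaklySafe F f C (D ∪ {E}) pre v) := by
  have key : WeaklySafe F f C D pre v → WeaklySafe F f C (D ∪ {E}) pre v := by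
    rintro ⟨h1, h2⟩
    refine ⟨h1, fun ρ hC hv => ?_⟩
    obtain ⟨ρ', hpre, hle, hsat⟩ := h2 ρ hC hv
    by_cases hE : PBSat ρ' E
    · refine ⟨ρ', hpre, hle, fun c hc => ?_⟩
      rcases hc with hc | hc | hc
      · exact hsat c (Or.inl hc)
      · exact hsat c (Or.inr hc)
      · rcases hc; exact hE
    · have hv' : (f ρ' : WithTop ℤ) < v :=
        lt_of_le_of_lt (by exact_mod_cast hle) hv
      obtain ⟨hsat2, hle2, hpre2⟩ := hrule ρ' hsat hv' hE
      refine ⟨applySubst ω ρ', htrans _ _ _ hpre2 hpre, le_trans hle2 hle, fun c hc => ?_⟩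
      rcases hc with hc | hc | hc
      · exact hsat2 c (Or.inl (Or.inl hc))
      · exact hsat2 c (Or.inl (Or.inr hc))
      · exact hsat2 c (Or.inr hc)
  exact ⟨fun ⟨hw, h3, h4⟩ => ⟨key hw, h3, h4⟩, key⟩
end

section
/- (Soundness of the checked deletion rule.) Suppose the configuration (C, D, ⪯, v) is safe (respectively, weakly safe), D' ⊆ D, and either C' = C, or C' = C \ {E} for some PB constraint E for which there exists a substitution ω such that every assignment ρ that satisfies C', has (f ρ : WithTop ℤ) < v, and does not satisfy E is such that ρ∘ω satisfies C' ∪ {E}, f (ρ∘ω) ≤ f ρ, and ρ∘ω ⪯ ρ. Then the configuration (C', D', ⪯, v) is safe (respectively, weakly safe). -/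
theorem checked_deletion_sound {V : Type} [Fintype V]
    (F : Set (PBConstraint V)) (f : (V → Bool) → ℤ)
    (C D C' D' : Set (PBConstraint V))
    (pre : (V → Bool) → (V → Bool) → Prop)
    (hrefl : ∀ ρ, pre ρ ρ)
    (htrans : ∀ a b c, pre a b → pre b c → pre a c)
    (v : WithTop ℤ)
    (hD : D' ⊆ D)
    (hC : C' = C ∨
      ∃ (E : PBConstraint V) (ω : Subst V), C' = C \ {E} ∧
        ∀ ρ : V → Bool, SatSet ρ C' → (f ρ : WithTop ℤ) < v → ¬ PBSat ρ E →
          SatSet (applySubst ω ρ) (C' ∪ {E}) ∧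
          f (applySubst ω ρ) ≤ f ρ ∧
          pre (applySubst ω ρ) ρ) :
    (Safe F f C D pre v → Safe F f C' D' pre v) ∧
      (WeaklySafe F f C D pre v → WeaklySafe F f C' D' pre v) := by
  have key : WeaklySafe F f C D pre v → WeaklySafe F f C' D' pre v := by
    rintro ⟨h1, h2⟩
    rcases hC with rfl | ⟨E, ω, rfl, hω⟩
    · refine ⟨h1, fun ρ hρ hlt => ?_⟩
      obtain ⟨ρ', hp, hf, hs⟩ := h2 ρ hρ hlt
      exact ⟨ρ', hp, hf, fun c hc => hs c (hc.imp id (fun h => hD h))⟩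
    · constructor
      · intro v' hv' hex
        obtain ⟨ρ, hs, hf⟩ := h1 v' hv' hex
        exact ⟨ρ, fun c hc => hs c hc.1, hf⟩
      · intro ρ hρ hlt
        by_cases hE : PBSat ρ E
        · have hρC : SatSet ρ C := by
            intro c hc
            by_cases hce : c = E
            · rw [hce]; exact hE
            · exact hρ c ⟨hc, hce⟩
          obtain ⟨ρ', hp, hf, hs⟩ := h2 ρ hρC hlt
          exact ⟨ρ', hp, hf, fun c hc =>
            hs c (Or.elim hc (fun h => Or.inl h.1) (fun h => Or.inr (hD h)))⟩
        · obtain ⟨hsω, hfω, hpω⟩ := hω ρ hρ hlt hE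
          have hρC : SatSet (applySubst ω ρ) C := by
            intro c hc
            by_cases hce : c = E
            · exact hsω c (Or.inr hce)
            · exact hsω c (Or.inl ⟨hc, hce⟩)
          have hltω : (f (applySubst ω ρ) : WithTop ℤ) < v :=
            lt_of_le_of_lt (by exact_mod_cast hfω) hlt
          obtain ⟨ρ', hp, hf, hs⟩ := h2 _ hρC hltω
          exact ⟨ρ', htrans _ _ _ hp hpω, le_trans hf hfω,
            fun c hc => hs c (Or.elim hc (fun h => Or.inl h.1) (fun h => Or.inr (hD h)))⟩
  refine ⟨?_, key⟩
  rintro ⟨hw, h3, h4⟩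
  refine ⟨key hw, h3, ?_⟩
  rintro v' hv' ⟨ρ, hs, hf⟩
  rcases hC with rfl | ⟨E, ω, rfl, hω⟩
  · exact h4 v' hv' ⟨ρ, hs, hf⟩
  · by_cases hE : PBSat ρ E
    · refine h4 v' hv' ⟨ρ, ?_, hf⟩
      intro c hc
      by_cases hce : c = E
      · rw [hce]; exact hE
      · exact hs c ⟨hc, hce⟩
    · have hlt : (f ρ : WithTop ℤ) < v := lt_of_le_of_lt (by exact_mod_cast hf) hv'
      obtain ⟨hsω, hfω, _⟩ := hω ρ hs hlt hE
      refine h4 v' hv' ⟨applySubst ω ρ, ?_, le_trans hfω hf⟩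
      intro c hc
      by_cases hce : c = E
      · exact hsω c (Or.inr hce)
      · exact hsω c (Or.inl ⟨hc, hce⟩)
end

section
/- (Soundness of the unchecked deletion rule.) If the configuration (C, D, ⪯, v) is weakly safe and C' ⊆ C, then the configuration (C', ∅, ⪯, v) is weakly safe. -/
theorem unchecked_deletion_sound {V : Type} [Fintype V]
    (F : Set (PBConstraint V)) (f : (V → Bool) → ℤ)
    (C D C' : Set (PBConstraint V))
    (pre : (V → Bool) → (V → Bool) → Prop)
    (hrefl : ∀ ρ, pre ρ ρ)
    (htrans : ∀ a b c, pre a b → pre b c → pre a c)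
    (v : WithTop ℤ)
    (hws : WeaklySafe F f C D pre v)
    (hC : C' ⊆ C) :
    WeaklySafe F f C' ∅ pre v := by
  obtain ⟨h1, h2⟩ := hws
  constructor
  · intro v' hv' hex
    obtain ⟨ρ, hρ, hf⟩ := h1 v' hv' hex
    exact ⟨ρ, fun c hc => hρ c (hC hc), hf⟩
  · intro ρ hρ _
    exact ⟨ρ, hrefl ρ, le_refl _, fun c hc => hρ c (by simpa using hc)⟩
end

section
/- (Soundness of the transfer rule.) If the configuration (C, D, ⪯, v) is safe (respectively, weakly safe) and C ⊆ C' ⊆ C ∪ D, then the configuration (C', D, ⪯, v) is safe (respectively, weakly safe). -/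
theorem transfer_rule_sound {V : Type} [Fintype V]
    (F : Set (PBConstraint V)) (f : (V → Bool) → ℤ)
    (C D C' : Set (PBConstraint V))
    (pre : (V → Bool) → (V → Bool) → Prop)
    (hrefl : ∀ ρ, pre ρ ρ)
    (htrans : ∀ a b c, pre a b → pre b c → pre a c)
    (v : WithTop ℤ)
    (hCC' : C ⊆ C') (hC'CD : C' ⊆ C ∪ D) :
    (Safe F f C D pre v → Safe F f C' D pre v) ∧
      (WeaklySafe F f C D pre v → WeaklySafe F f C' D pre v) := by
  have wk : WeaklySafe F f C D pre v → WeaklySafe F f C' D pre v := by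
    rintro ⟨h1, h2⟩
    constructor
    · intro v' hv' hF
      obtain ⟨ρ, hρC, hρf⟩ := h1 v' hv' hF
      have hlt : (f ρ : WithTop ℤ) < v :=
        lt_of_le_of_lt (by exact_mod_cast hρf) hv'
      obtain ⟨ρ', hpre, hle, hsat⟩ := h2 ρ hρC hlt
      exact ⟨ρ', fun c hc => hsat c (hC'CD hc), le_trans hle hρf⟩
    · intro ρ hρC' hlt
      obtain ⟨ρ', hpre, hle, hsat⟩ := h2 ρ (fun c hc => hρC' c (hCC' hc)) hlt
      refine ⟨ρ', hpre, hle, fun c hc => ?_⟩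
      rcases hc with hc | hc
      · exact hsat c (hC'CD hc)
      · exact hsat c (Or.inr hc)
  refine ⟨?_, wk⟩
  rintro ⟨h1, h2, h3⟩
  refine ⟨wk h1, h2, ?_⟩
  intro v' hv' ⟨ρ, hρC', hρf⟩
  exact h3 v' hv' ⟨ρ, fun c hc => hρC' c (hCC' hc), hρf⟩
end

section
/- (Soundness of the dominance-based strengthening rule.) Suppose the configuration (C, D, ⪯, v) is safe (respectively, weakly safe), E is a PB constraint, and ω is a substitution such that: (a) for every assignment ρ that satisfies C ∪ D, has (f ρ : WithTop ℤ) < v, and does not satisfy E, the composed assignment ρ∘ω satisfies C, f (ρ∘ω) ≤ f ρ, and ρ∘ω ⪯ ρ; and (b) there is no assignment ρ that satisfies C ∪ D, has (f ρ : WithTop ℤ) < v, does not satisfy E, and satisfies ρ ⪯ ρ∘ω. Then the configuration (C, D ∪ {E}, ⪯, v) is safe (respectively, weakly safe). -/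
theorem dominance_based_strengthening_sound {V : Type} [Fintype V]
    (F : Set (PBConstraint V)) (f : (V → Bool) → ℤ)
    (C D : Set (PBConstraint V))
    (pre : (V → Bool) → (V → Bool) → Prop)
    (hrefl : ∀ ρ, pre ρ ρ)
    (htrans : ∀ a b c, pre a b → pre b c → pre a c)
    (v : WithTop ℤ) (E : PBConstraint V) (ω : Subst V)
    (ha : ∀ ρ : V → Bool, SatSet ρ (C ∪ D) → (f ρ : WithTop ℤ) < v →
      ¬ PBSat ρ E →
        SatSet (applySubst ω ρ) C ∧
        f (applySubst ω ρ) ≤ f ρ ∧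
        pre (applySubst ω ρ) ρ)
    (hb : ¬ ∃ ρ : V → Bool, SatSet ρ (C ∪ D) ∧ (f ρ : WithTop ℤ) < v ∧
      ¬ PBSat ρ E ∧ pre ρ (applySubst ω ρ)) :
    (Safe F f C D pre v → Safe F f C (D ∪ {E}) pre v) ∧
      (WeaklySafe F f C D pre v → WeaklySafe F f C (D ∪ {E}) pre v) := by
  have key : WeaklySafe F f C D pre v → WeaklySafe F f C (D ∪ {E}) pre v := by
    rintro ⟨hw1, hw2⟩
    refine ⟨hw1, ?_⟩
    have hfin : Finite (V → Bool) := by infer_instance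
    set r : (V → Bool) → (V → Bool) → Prop := fun a b => pre a b ∧ ¬ pre b a with hr
    have hirr : ∀ a, ¬ r a a := fun a h => h.2 h.1
    have htr : ∀ a b c, r a b → r b c → r a c := fun a b c h1 h2 =>
      ⟨htrans _ _ _ h1.1 h2.1, fun h => h2.2 (htrans _ _ _ h h1.1)⟩
    have hwf : WellFounded r := by
      have : IsTrans _ r := ⟨htr⟩
      have : IsIrrefl _ r := ⟨hirr⟩
      exact Finite.wellFounded_of_trans_of_irrefl r
    have P : ∀ σ : V → Bool, SatSet σ (C ∪ D) → (f σ : WithTop ℤ) < v →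
        ∃ ρ', pre ρ' σ ∧ f ρ' ≤ f σ ∧ SatSet ρ' (C ∪ (D ∪ {E})) := by
      intro σ
      induction σ using hwf.induction with
      | _ σ ih =>
      intro hσ hfσ
      by_cases hE : PBSat σ E
      · refine ⟨σ, hrefl σ, le_refl _, ?_⟩
        intro c hc
        rcases hc with hc | hc | hc
        · exact hσ c (Or.inl hc)
        · exact hσ c (Or.inr hc)
        · cases hc; exact hE
      · obtain ⟨hC, hf, hp⟩ := ha σ hσ hfσ hE
        have hnp : ¬ pre σ (applySubst ω σ) := fun h => hb ⟨σ, hσ, hfσ, hE, h⟩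
        have hfω : (f (applySubst ω σ) : WithTop ℤ) < v :=
          lt_of_le_of_lt (by exact_mod_cast hf) hfσ
        obtain ⟨σ1, hp1, hf1, hs1⟩ := hw2 _ hC hfω
        have hr1 : r σ1 σ := ⟨htrans _ _ _ hp1 hp, fun h => hnp (htrans _ _ _ h hp1)⟩
        have hfσ1 : (f σ1 : WithTop ℤ) < v :=
          lt_of_le_of_lt (by exact_mod_cast hf1.trans hf) hfσ
        obtain ⟨ρ', hp', hf', hs'⟩ := ih σ1 hr1 hs1 hfσ1
        exact ⟨ρ', htrans _ _ _ hp' (htrans _ _ _ hp1 hp), hf'.trans (hf1.trans hf), hs'⟩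
    intro ρ hρ hfρ
    obtain ⟨ρ1, hp1, hf1, hs1⟩ := hw2 ρ hρ hfρ
    have hfρ1 : (f ρ1 : WithTop ℤ) < v := lt_of_le_of_lt (by exact_mod_cast hf1) hfρ
    obtain ⟨ρ', hp', hf', hs'⟩ := P ρ1 hs1 hfρ1
    exact ⟨ρ', htrans _ _ _ hp' hp1, hf'.trans hf1, hs'⟩
  exact ⟨fun h => ⟨key h.1, h.2.1, h.2.2⟩, key⟩
end

section
/- (Soundness of the order change rule.) If the configuration (C, ∅, ⪯, v) with empty derived set is safe (respectively, weakly safe) and ⪯' is any preorder on assignments, then the configuration (C, ∅, ⪯', v) is safe (respectively, weakly safe). -/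
theorem order_change_sound {V : Type} [Fintype V]
    (F : Set (PBConstraint V)) (f : (V → Bool) → ℤ)
    (C : Set (PBConstraint V))
    (pre pre' : (V → Bool) → (V → Bool) → Prop)
    (hrefl : ∀ ρ, pre ρ ρ)
    (htrans : ∀ a b c, pre a b → pre b c → pre a c)
    (hrefl' : ∀ ρ, pre' ρ ρ)
    (htrans' : ∀ a b c, pre' a b → pre' b c → pre' a c)
    (v : WithTop ℤ) :
    (Safe F f C ∅ pre v → Safe F f C ∅ pre' v) ∧
      (WeaklySafe F f C ∅ pre v → WeaklySafe F f C ∅ pre' v) := by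
  have key : WeaklySafe F f C ∅ pre v → WeaklySafe F f C ∅ pre' v := by
    rintro ⟨h1, _⟩
    refine ⟨h1, fun ρ hρ _ => ⟨ρ, hrefl' ρ, le_refl _, ?_⟩⟩
    simpa using hρ
  exact ⟨fun ⟨hw, h2, h3⟩ => ⟨key hw, h2, h3⟩, key⟩
end

section
/- Suppose the configuration (C, D, ⪯, v) is safe and there exists an assignment α satisfying F with (f α : WithTop ℤ) < v. Then both F and C ∪ D are satisfiable, and the minimum of f over assignments satisfying F equals the minimum of f over assignments satisfying C ∪ D (i.e., f-minimal solutions for F and for C ∪ D have the same objective value). -/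
theorem safe_config_preserves_optimum {V : Type} [Fintype V]
    (F : Set (PBConstraint V)) (f : (V → Bool) → ℤ)
    (C D : Set (PBConstraint V))
    (pre : (V → Bool) → (V → Bool) → Prop)
    (hrefl : ∀ ρ, pre ρ ρ)
    (htrans : ∀ a b c, pre a b → pre b c → pre a c)
    (v : WithTop ℤ)
    (hs : Safe F f C D pre v)
    (hα : ∃ α : V → Bool, SatSet α F ∧ (f α : WithTop ℤ) < v) :
    PBSatisfiable F ∧ PBSatisfiable (C ∪ D) ∧
      ∃ α β : V → Bool, SatSet α F ∧ SatSet β (C ∪ D) ∧ f α = f β ∧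
        (∀ α' : V → Bool, SatSet α' F → f α ≤ f α') ∧
        (∀ β' : V → Bool, SatSet β' (C ∪ D) → f β ≤ f β') := by

  obtain ⟨⟨h1, h2⟩, _hgoal, h4⟩ := hs
  obtain ⟨α0, hα0F, hα0v⟩ := hα
  -- minimal F-solution
  obtain ⟨αm, hαmF, hαmmin⟩ := Set.exists_min_image {ρ | SatSet ρ F} f
    (Set.toFinite _) ⟨α0, hα0F⟩
  have hαmv : (f αm : WithTop ℤ) < v :=
    lt_of_le_of_lt (by exact_mod_cast hαmmin α0 hα0F) hα0v
  -- get C-solution with small value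
  obtain ⟨ρC, hρC, hρCle⟩ := h1 (f αm) hαmv ⟨αm, hαmF, le_refl _⟩
  have hρCv : (f ρC : WithTop ℤ) < v :=
    lt_of_le_of_lt (by exact_mod_cast hρCle) hαmv
  obtain ⟨ρ', _, hρ'le, hρ'CD⟩ := h2 ρC hρC hρCv
  -- minimal C∪D-solution
  obtain ⟨βm, hβmCD, hβmmin⟩ := Set.exists_min_image {ρ | SatSet ρ (C ∪ D)} f
    (Set.toFinite _) ⟨ρ', hρ'CD⟩
  have hβle : f βm ≤ f αm := le_trans (hβmmin ρ' hρ'CD) (le_trans hρ'le hρCle)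
  have hβmC : SatSet βm C := fun c hc => hβmCD c (Or.inl hc)
  have hβv : (f βm : WithTop ℤ) < v := lt_of_le_of_lt (by exact_mod_cast hβle) hαmv
  obtain ⟨ρF, hρF, hρFle⟩ := h4 (f βm) hβv ⟨βm, hβmC, le_refl _⟩
  have hαle : f αm ≤ f βm := le_trans (hαmmin ρF hρF) hρFle
  exact ⟨⟨αm, hαmF⟩, ⟨βm, hβmCD⟩, αm, βm, hαmF, hβmCD, le_antisymm hαle hβle,
    fun α' h => hαmmin α' h, fun β' h => hβmmin β' h⟩
end

section
/- (Soundness of the cutting-planes division rule.) Let n : ℕ, let a : Fin n → ℤ with a i ≥ 0 for all i, let A : ℤ, let d : ℤ with d > 0, and let x : Fin n → ℤ with x i = 0 or x i = 1 for all i. If ∑_{i} a i * x i ≥ A, then ∑_{i} ⌈a i / d⌉ * x i ≥ ⌈A / d⌉, where ⌈m / d⌉ denotes the ceiling of the rational number m / d (for integers m and d > 0). -/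
theorem cutting_planes_division_sound (n : ℕ) (a : Fin n → ℤ)
    (ha : ∀ i, 0 ≤ a i) (A : ℤ) (d : ℤ) (hd : 0 < d)
    (x : Fin n → ℤ) (hx : ∀ i, x i = 0 ∨ x i = 1)
    (h : A ≤ ∑ i : Fin n, a i * x i) :
    ⌈(A : ℚ) / (d : ℚ)⌉ ≤ ∑ i : Fin n, ⌈(a i : ℚ) / (d : ℚ)⌉ * x i := by
  have hd' : (0:ℚ) < (d:ℚ) := by exact_mod_cast hd
  rw [Int.ceil_le]
  push_cast
  rw [div_le_iff₀ hd']
  have key : ∀ i, (a i : ℚ) * x i ≤ (⌈(a i : ℚ) / d⌉ : ℚ) * x i * d := by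
    intro i
    rcases hx i with h0 | h1
    · simp [h0]
    · rw [h1]; push_cast; rw [mul_one, mul_one]
      calc (a i : ℚ) = (a i : ℚ) / d * d := by field_simp
        _ ≤ (⌈(a i : ℚ) / d⌉ : ℚ) * d :=
          mul_le_mul_of_nonneg_right (Int.le_ceil _) hd'.le
  calc (A:ℚ) ≤ ∑ i, (a i : ℚ) * x i := by exact_mod_cast h
    _ ≤ ∑ i, (⌈(a i : ℚ) / d⌉ : ℚ) * x i * d := Finset.sum_le_sum fun i _ => key i
    _ = (∑ i, (⌈(a i : ℚ) / d⌉ : ℚ) * x i) * d := by rw [Finset.sum_mul]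
end

section
/- (Correctness of the pseudo-Boolean encoding of the lexicographic order.) Let n : ℕ and for b : Bool write ι b = if b then (1 : ℤ) else 0. For all α, β : Fin n → Bool, the inequality ∑_{i : Fin n} 2^(n − 1 − i) * (ι (β i) − ι (α i)) ≥ 0 holds if and only if α ≤ β in the lexicographic order (meaning α = β, or there exists i : Fin n such that α j = β j for all j < i, α i = false, and β i = true). Consequently, the binary relation on Fin n → Bool defined by this single pseudo-Boolean constraint is reflexive and transitive, i.e., a preorder. -/
/-- `ι b` is `1` if `b` is true and `0` otherwise. -/
def iotaB (b : Bool) : ℤ := if b then 1 else 0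

/-- The lexicographic order on assignments `Fin n → Bool`
(with `false < true` and higher priority to smaller indices). -/
def LexLe {n : ℕ} (α β : Fin n → Bool) : Prop :=
  α = β ∨ ∃ i : Fin n, (∀ j : Fin n, j < i → α j = β j) ∧
    α i = false ∧ β i = true

/-- The relation on assignments defined by the single pseudo-Boolean constraint
`∑ i, 2^(n−1−i) (β i − α i) ≥ 0`. -/
def LexPB (n : ℕ) (α β : Fin n → Bool) : Prop :=
  0 ≤ ∑ i : Fin n, (2 : ℤ) ^ (n - 1 - (i : ℕ)) * (iotaB (β i) - iotaB (α i))

def valB (n : ℕ) (α : Fin n → Bool) : ℤ :=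
  ∑ i : Fin n, (2 : ℤ) ^ (n - 1 - (i : ℕ)) * iotaB (α i)

lemma iotaB_nonneg (b : Bool) : 0 ≤ iotaB b := by cases b <;> simp [iotaB]
lemma iotaB_le_one (b : Bool) : iotaB b ≤ 1 := by cases b <;> simp [iotaB]

lemma valB_nonneg (n : ℕ) (α : Fin n → Bool) : 0 ≤ valB n α :=
  Finset.sum_nonneg fun i _ => mul_nonneg (by positivity) (iotaB_nonneg _)

lemma valB_succ (n : ℕ) (α : Fin (n+1) → Bool) :
    valB (n+1) α = 2^n * iotaB (α 0) + valB n (Fin.tail α) := by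
  rw [valB, Fin.sum_univ_succ]
  congr 1
  rw [valB]
  apply Finset.sum_congr rfl
  intro i _
  have h : n + 1 - 1 - ((i.succ : Fin (n+1)) : ℕ) = n - 1 - (i : ℕ) := by
    simp; omega
  rw [h]
  rfl

lemma valB_lt (n : ℕ) (α : Fin n → Bool) : valB n α < 2^n := by
  induction n with
  | zero => simp [valB]
  | succ n ih =>
    rw [valB_succ]
    have h1 := iotaB_le_one (α 0)
    have h2 := ih (Fin.tail α)
    have : (2:ℤ)^(n+1) = 2^n * 1 + 2^n := by ring
    rw [this]
    have hp : (0:ℤ) < 2^n := by positivity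
    nlinarith

lemma lexLe_succ_iff {n : ℕ} (α β : Fin (n+1) → Bool) :
    LexLe α β ↔ (α 0 = false ∧ β 0 = true) ∨ (α 0 = β 0 ∧ LexLe (Fin.tail α) (Fin.tail β)) := by
  constructor
  · rintro (rfl | ⟨i, hpre, ha, hb⟩)
    · exact Or.inr ⟨rfl, Or.inl rfl⟩
    · rcases Fin.eq_zero_or_eq_succ i with rfl | ⟨j, rfl⟩
      · exact Or.inl ⟨ha, hb⟩
      · refine Or.inr ⟨hpre 0 (Fin.succ_pos j), Or.inr ⟨j, ?_, ha, hb⟩⟩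
        intro k hk
        exact hpre k.succ (Fin.succ_lt_succ_iff.mpr hk)
  · rintro (⟨ha, hb⟩ | ⟨h0, (ht | ⟨j, hpre, ha, hb⟩)⟩)
    · exact Or.inr ⟨0, fun j hj => absurd hj (Fin.not_lt_zero j), ha, hb⟩
    · left
      funext k
      rcases Fin.eq_zero_or_eq_succ k with rfl | ⟨m, rfl⟩
      · exact h0
      · exact congrFun ht m
    · refine Or.inr ⟨j.succ, ?_, ha, hb⟩
      intro k hk
      rcases Fin.eq_zero_or_eq_succ k with rfl | ⟨m, rfl⟩
      · exact h0
      · exact hpre m (Fin.succ_lt_succ_iff.mp hk)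

lemma valB_le_iff : ∀ {n : ℕ} (α β : Fin n → Bool), valB n α ≤ valB n β ↔ LexLe α β := by
  intro n
  induction n with
  | zero =>
    intro α β
    simp [valB, LexLe]
    funext i
    exact i.elim0
  | succ n ih =>
    intro α β
    rw [valB_succ, valB_succ, lexLe_succ_iff]
    have h1 := valB_lt n (Fin.tail α)
    have h2 := valB_lt n (Fin.tail β)
    have h3 := valB_nonneg n (Fin.tail α)
    have h4 := valB_nonneg n (Fin.tail β)
    rcases hα : α 0 <;> rcases hβ : β 0 <;> simp [iotaB, hα, hβ, ih] <;> linarith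

theorem lex_encoding_correct (n : ℕ) :
    (∀ α β : Fin n → Bool, LexPB n α β ↔ LexLe α β) ∧
      Reflexive (LexPB n) ∧ Transitive (LexPB n) := by
  have key : ∀ α β : Fin n → Bool, LexPB n α β ↔ valB n α ≤ valB n β := by
    intro α β
    have h : ∑ i : Fin n, (2 : ℤ) ^ (n - 1 - (i : ℕ)) * (iotaB (β i) - iotaB (α i))
        = valB n β - valB n α := by
      rw [valB, valB, ← Finset.sum_sub_distrib]
      apply Finset.sum_congr rfl
      intro i _
      ring
    rw [LexPB, h, sub_nonneg]
  refine ⟨fun α β => (key α β).trans (valB_le_iff α β), ?_, ?_⟩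
  · intro α; rw [key]
  · intro α β γ hab hbc
    rw [key] at *
    exact le_trans hab hbc
end

section
/- (Correctness of the clausal lex-leader encoding.) Let n : ℕ, let σ be a signed permutation of the variables Fin n acting on assignments as above, let α : Fin n → Bool be an assignment, and write β = α∘σ. Then there exists y : Fin (n+1) → Bool such that all of the following clauses hold: (13a) y 0 = true; (13b) for every j : Fin n, y j = true and α j = true imply β j = true; (13c) for every j : Fin n, y (j+1) = true implies y j = true; (13d) for every j : Fin n, y (j+1) = true and β j = true imply α j = true; (13e) for every j : Fin n, y j = true and y (j+1) = false imply α j = false; (13f) for every j : Fin n, y j = true and y (j+1) = false imply β j = true — if and only if α ≤ β in the lexicographic order on Fin n → Bool (with false < true and higher priority to smaller indices). Moreover, when α ≤_lex β, the choice y 0 = true, y (j+1) = y j && (α j == β j) witnesses the clauses. -/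
/-- The clauses (13a)–(13f) of the clausal lex-leader encoding, for
assignments `α`, `β` and fresh variables `y`. -/
def LexLeaderClauses (n : ℕ) (α β : Fin n → Bool)
    (y : Fin (n + 1) → Bool) : Prop :=
  y 0 = true ∧
  (∀ j : Fin n, y j.castSucc = true → α j = true → β j = true) ∧
  (∀ j : Fin n, y j.succ = true → y j.castSucc = true) ∧
  (∀ j : Fin n, y j.succ = true → β j = true → α j = true) ∧
  (∀ j : Fin n, y j.castSucc = true → y j.succ = false → α j = false) ∧
  (∀ j : Fin n, y j.castSucc = true → y j.succ = false → β j = true)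

lemma clauses_of_lexle {n : ℕ} {α β : Fin n → Bool} (h : LexLe α β)
    (y : Fin (n+1) → Bool) (h0 : y 0 = true)
    (hr : ∀ j : Fin n, y j.succ = (y j.castSucc && (α j == β j))) :
    LexLeaderClauses n α β y := by
  have hy : ∀ k : Fin (n+1), (y k = true ↔ ∀ i : Fin n, (i:ℕ) < (k:ℕ) → α i = β i) := by
    rintro ⟨m, hm⟩
    induction m with
    | zero =>
      have e : (⟨0, hm⟩ : Fin (n+1)) = 0 := rfl
      simp [e, h0]
    | succ m ih =>
      have hmn : m < n := Nat.lt_of_succ_lt_succ hm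
      have e1 : (⟨m+1, hm⟩ : Fin (n+1)) = (⟨m, hmn⟩ : Fin n).succ := rfl
      have e2 : (⟨m, hmn⟩ : Fin n).castSucc = (⟨m, Nat.lt_succ_of_lt hmn⟩ : Fin (n+1)) := rfl
      rw [e1, hr, e2, Bool.and_eq_true, ih (Nat.lt_succ_of_lt hmn)]
      constructor
      · rintro ⟨h1, h2⟩ i hi
        rcases Nat.lt_succ_iff_lt_or_eq.mp hi with hi | hi
        · exact h1 i hi
        · have : i = ⟨m, hmn⟩ := Fin.ext hi
          subst this; exact beq_iff_eq.mp h2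
      · intro h1
        exact ⟨fun i hi => h1 i (Nat.lt_succ_of_lt hi),
          beq_iff_eq.mpr (h1 ⟨m, hmn⟩ (Nat.lt_succ_self m))⟩
  have agree : ∀ j : Fin n, y j.castSucc = true → ∀ i : Fin n, i < j → α i = β i := by
    intro j hj i hi
    exact (hy j.castSucc).mp hj i (by rw [Fin.coe_castSucc]; exact hi)
  refine ⟨h0, ?_, ?_, ?_, ?_, ?_⟩
  · -- 13b
    intro j hj haj
    rcases h with h | ⟨i₀, hlt, ha0, hb0⟩
    · rw [← h]; exact haj
    · rcases lt_trichotomy j i₀ with hc | hc | hc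
      · rw [← hlt j hc]; exact haj
      · subst hc; rw [haj] at ha0; exact Bool.noConfusion ha0
      · have := agree j hj i₀ hc; rw [ha0, hb0] at this; exact Bool.noConfusion this
  · -- 13c
    intro j hj; rw [hr, Bool.and_eq_true] at hj; exact hj.1
  · -- 13d
    intro j hj hb
    have := (hy j.succ).mp hj j (by simp)
    rw [this]; exact hb
  all_goals {
    intro j hcast hsucc
    rw [hr, hcast, Bool.true_and] at hsucc
    have hne : α j ≠ β j := fun hE => by simp [hE] at hsucc
    rcases h with h | ⟨i₀, hlt, ha0, hb0⟩
    · exact absurd (congrFun h j) hne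
    · rcases lt_trichotomy j i₀ with hc | hc | hc
      · exact absurd (hlt j hc) hne
      · subst hc; first | exact ha0 | exact hb0
      · have := agree j hcast i₀ hc; rw [ha0, hb0] at this; exact Bool.noConfusion this }

theorem clausal_lex_leader_encoding_correct (n : ℕ)
    (π : Equiv.Perm (Fin n)) (t : Fin n → Bool)
    (α β : Fin n → Bool)
    (hβ : β = fun x => xor (t x) (α (π x))) :
    ((∃ y : Fin (n + 1) → Bool, LexLeaderClauses n α β y) ↔ LexLe α β) ∧
      (LexLe α β → ∀ y : Fin (n + 1) → Bool, y 0 = true →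
        (∀ j : Fin n, y j.succ = (y j.castSucc && (α j == β j))) →
        LexLeaderClauses n α β y) := by
  constructor
  · constructor
    · -- existence → LexLe
      rintro ⟨y, h0, h13b, h13c, h13d, h13e, h13f⟩
      have agree1 : ∀ j : Fin n, y j.succ = true → α j = β j := by
        intro j hj
        have hc := h13c j hj
        have h1 := h13b j hc
        have h2 := h13d j hj
        cases hαj : α j <;> cases hβj : β j <;> simp_all
      by_cases hall : ∀ j : Fin n, y j.succ = true
      · left; funext j; exact agree1 j (hall j)
      · push_neg at hall
        obtain ⟨j0, hj0⟩ := hall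
        obtain ⟨j, hjmem, hjmin⟩ := Finset.exists_min_image
          (Finset.univ.filter (fun j : Fin n => y j.succ = false)) id
          ⟨j0, by simp [Bool.not_eq_true] at hj0 ⊢; exact hj0⟩
        simp only [Finset.mem_filter, Finset.mem_univ, true_and] at hjmem
        have htrue : ∀ i : Fin n, i < j → y i.succ = true := by
          intro i hi
          by_contra hb
          rw [Bool.not_eq_true] at hb
          have : id j ≤ id i := hjmin i (by simp [hb])
          exact absurd hi (not_lt.mpr this)
        have hcast : y j.castSucc = true := by
          obtain ⟨m, hm⟩ := j
          cases m with
          | zero => exact h0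
          | succ m =>
            have hmn : m < n := Nat.lt_of_succ_lt hm
            have e : (⟨m+1, hm⟩ : Fin n).castSucc = (⟨m, hmn⟩ : Fin n).succ := rfl
            rw [e]
            exact htrue ⟨m, hmn⟩ (by simp [Fin.lt_def])
        right
        exact ⟨j, fun i hi => agree1 i (htrue i hi),
          h13e j hcast hjmem, h13f j hcast hjmem⟩
    · -- LexLe → existence
      intro h
      refine ⟨fun k => decide (∀ i : Fin n, (i:ℕ) < (k:ℕ) → α i = β i),
        clauses_of_lexle h _ (by simp) ?_⟩
      intro j
      have e : (α j == β j) = decide (α j = β j) := by cases α j <;> cases β j <;> rfl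
      rw [e, ← Bool.decide_and, decide_eq_decide]
      constructor
      · intro h1
        refine ⟨fun i hi => h1 i ?_, h1 j (by simp)⟩
        simp only [Fin.coe_castSucc] at hi
        simp [Nat.lt_succ_of_lt hi]
      · rintro ⟨h1, h2⟩ i hi
        simp only [Fin.val_succ] at hi
        rcases Nat.lt_succ_iff_lt_or_eq.mp hi with hi | hi
        · exact h1 i (by simpa using hi)
        · have : i = j := Fin.ext hi
          subst this; exact h2
  · intro h y h0 hr
    exact clauses_of_lexle h y h0 hr
end

section
/- (Soundness of the alternative redundance-based strengthening rule.) Suppose the configuration (C, D, ⪯, v) is alternatively safe (respectively, alternatively weakly safe), E is a PB constraint, and ω is a substitution such that for every assignment ρ that satisfies C ∪ D, has (f ρ : WithTop ℤ) < v, and does not satisfy E: the composed assignment ρ∘ω satisfies C ∪ D ∪ {E}, f (ρ∘ω) ≤ f ρ, and if f (ρ∘ω) = f ρ then ρ∘ω ⪯ ρ. Then the configuration (C, D ∪ {E}, ⪯, v) is alternatively safe (respectively, alternatively weakly safe). -/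
/-- The alternative comparison `α ⪯'_f β`: `f α ≤ f β`, and if
`f α = f β` then `α ⪯ β`. -/
def AltPre {V : Type} (f : (V → Bool) → ℤ)
    (pre : (V → Bool) → (V → Bool) → Prop)
    (α β : V → Bool) : Prop :=
  f α ≤ f β ∧ (f α = f β → pre α β)

def AltWeaklySafe {V : Type} [Fintype V] (F : Set (PBConstraint V))
    (f : (V → Bool) → ℤ) (C D : Set (PBConstraint V))
    (pre : (V → Bool) → (V → Bool) → Prop) (v : WithTop ℤ) : Prop :=
  (∀ v' : ℤ, (v' : WithTop ℤ) < v →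
      (∃ ρ, SatSet ρ F ∧ f ρ ≤ v') → ∃ ρ, SatSet ρ C ∧ f ρ ≤ v') ∧
  (∀ ρ, SatSet ρ C → (f ρ : WithTop ℤ) < v →
      ∃ ρ', AltPre f pre ρ' ρ ∧ SatSet ρ' (C ∪ D))

def AltSafe {V : Type} [Fintype V] (F : Set (PBConstraint V))
    (f : (V → Bool) → ℤ) (C D : Set (PBConstraint V))
    (pre : (V → Bool) → (V → Bool) → Prop) (v : WithTop ℤ) : Prop :=
  AltWeaklySafe F f C D pre v ∧
  (v < ⊤ → ∃ ρ, SatSet ρ F ∧ (f ρ : WithTop ℤ) ≤ v) ∧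
  (∀ v' : ℤ, (v' : WithTop ℤ) < v →
      (∃ ρ, SatSet ρ C ∧ f ρ ≤ v') → ∃ ρ, SatSet ρ F ∧ f ρ ≤ v')

theorem alternative_redundance_sound {V : Type} [Fintype V]
    (F : Set (PBConstraint V)) (f : (V → Bool) → ℤ)
    (C D : Set (PBConstraint V))
    (pre : (V → Bool) → (V → Bool) → Prop)
    (hrefl : ∀ ρ, pre ρ ρ)
    (htrans : ∀ a b c, pre a b → pre b c → pre a c)
    (v : WithTop ℤ) (E : PBConstraint V) (ω : Subst V)
    (hrule : ∀ ρ : V → Bool, SatSet ρ (C ∪ D) → (f ρ : WithTop ℤ) < v →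
      ¬ PBSat ρ E →
        SatSet (applySubst ω ρ) (C ∪ D ∪ {E}) ∧
        f (applySubst ω ρ) ≤ f ρ ∧
        (f (applySubst ω ρ) = f ρ → pre (applySubst ω ρ) ρ)) :
    (AltSafe F f C D pre v → AltSafe F f C (D ∪ {E}) pre v) ∧
      (AltWeaklySafe F f C D pre v → AltWeaklySafe F f C (D ∪ {E}) pre v) := by
  have key : AltWeaklySafe F f C D pre v → AltWeaklySafe F f C (D ∪ {E}) pre v := by
    rintro ⟨h1, h2⟩
    refine ⟨h1, ?_⟩
    intro ρ hC hlt
    obtain ⟨ρ', ⟨hle, heq⟩, hsat⟩ := h2 ρ hC hlt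
    have hlt' : (f ρ' : WithTop ℤ) < v :=
      lt_of_le_of_lt (by exact_mod_cast hle) hlt
    by_cases hE : PBSat ρ' E
    · refine ⟨ρ', ⟨hle, heq⟩, ?_⟩
      intro c hc
      rcases hc with hc | (hc | hc)
      · exact hsat c (Or.inl hc)
      · exact hsat c (Or.inr hc)
      · cases hc; exact hE
    · obtain ⟨hsat2, hle2, hpre2⟩ := hrule ρ' hsat hlt' hE
      refine ⟨applySubst ω ρ', ⟨le_trans hle2 hle, ?_⟩, ?_⟩
      · intro he
        have h1' : f (applySubst ω ρ') = f ρ' := le_antisymm hle2 (he ▸ hle)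
        exact htrans _ _ _ (hpre2 h1') (heq (h1'.symm.trans he))
      · intro c hc
        rcases hc with hc | (hc | hc)
        · exact hsat2 c (Or.inl (Or.inl hc))
        · exact hsat2 c (Or.inl (Or.inr hc))
        · exact hsat2 c (Or.inr hc)
  exact ⟨fun h => ⟨key h.1, h.2.1, h.2.2⟩, key⟩
end
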